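/- The function E(α, β) = Λ(α) + Λ(β) + Λ(π − α − β), defined on the open triangle domain D = {(α, β) : α > 0, β > 0, α + β < π}, has Hessian matrix H(E)(α,β) = [[−sin β/(sin(α+β) sin α), cos(α+β)/sin(α+β)], [cos(α+β)/sin(α+β), −sin α/(sin(α+β) sin β)]], and this Hessian is negative definite at every point of D. -/

import Mathlib

open Real MeasureTheory intervalIntegral Matrix

/-- The Lobachevsky function. -/
noncomputable def lob (x : ℝ) : ℝ := -∫ t in (0:ℝ)..x, Real.log |2 * Real.sin t|

/-- The hyperbolic volume energy of a Euclidean triangle with angles a, b, π - a - b. -/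
noncomputable def Etri (a b : ℝ) : ℝ := lob a + lob b + lob (Real.pi - a - b)

/-
The Lobachevsky function satisfies Λ' = -log|2 sin| and hence Λ'' = -cot away from the zeros
of sin. By the chain rule the second partials of E(α, β) = Λ(α) + Λ(β) + Λ(π - α - β) are
Λ''(α) + Λ''(γ), Λ''(γ) and Λ''(β) + Λ''(γ) with γ = π - α - β, and cot(α + β) - cot α =
-sin β / (sin(α + β) sin α). On the triangle domain the diagonal entries are negative and the
determinant is (1 - cos²(α + β)) / sin²(α + β) = 1, so the Hessian is negative definite.
-/

open Filter Topology

lemma intervalIntegrable_log_abs_two_mul_sin (a b : ℝ) :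
    IntervalIntegrable (fun t => log |2 * sin t|) volume a b := by
  simpa only [Real.norm_eq_abs] using
    (analyticOnNhd_const.mul analyticOnNhd_sin).meromorphicOn.intervalIntegrable_log_norm
      (f := fun t => 2 * sin t)

lemma hasDerivAt_log_abs_two_mul_sin {y : ℝ} (hy : sin y ≠ 0) :
    HasDerivAt (fun t => log |2 * sin t|) (cos y / sin y) y := by
  simp only [Real.log_abs]
  convert ((hasDerivAt_sin y).const_mul 2).log (mul_ne_zero two_ne_zero hy) using 1
  rw [mul_div_mul_left _ _ two_ne_zero]

lemma hasDerivAt_lob {y : ℝ} (hy : sin y ≠ 0) : HasDerivAt lob (-log |2 * sin y|) y :=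
  (integral_hasDerivAt_right (intervalIntegrable_log_abs_two_mul_sin 0 y)
    (Measurable.stronglyMeasurable (by fun_prop)).stronglyMeasurableAtFilter
    (hasDerivAt_log_abs_two_mul_sin hy).continuousAt).neg

lemma eventually_sin_ne_zero {y : ℝ} (hy : sin y ≠ 0) : ∀ᶠ t in 𝓝 y, sin t ≠ 0 :=
  continuous_sin.continuousAt.eventually_ne hy

lemma hasDerivAt_deriv_lob {y : ℝ} (hy : sin y ≠ 0) :
    HasDerivAt (deriv lob) (-(cos y / sin y)) y := by
  have hderiv : deriv lob =ᶠ[𝓝 y] fun t => -log |2 * sin t| := by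
    filter_upwards [eventually_sin_ne_zero hy] with t ht
    exact (hasDerivAt_lob ht).deriv
  exact (hasDerivAt_log_abs_two_mul_sin hy).neg.congr_of_eventuallyEq hderiv

lemma sin_pi_sub_sub (a b : ℝ) : sin (π - a - b) = sin (a + b) := by
  rw [sub_sub, sin_pi_sub]

lemma cos_pi_sub_sub (a b : ℝ) : cos (π - a - b) = -cos (a + b) := by
  rw [sub_sub, cos_pi_sub]

lemma hasDerivAt_pi_sub_sub_const (a b : ℝ) : HasDerivAt (fun x => π - x - b) (-1) a := by
  simpa using ((hasDerivAt_id a).const_sub π).sub_const b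

lemma Etri_comm (a b : ℝ) : Etri a b = Etri b a := by
  rw [Etri, Etri, sub_right_comm, add_comm (lob a)]

lemma hasDerivAt_Etri_fst {a b : ℝ} (ha : sin a ≠ 0) (hab : sin (a + b) ≠ 0) :
    HasDerivAt (fun a' => Etri a' b) (deriv lob a - deriv lob (π - a - b)) a := by
  have hlob := (hasDerivAt_lob ha).differentiableAt.hasDerivAt
  have hlob' :=
    (hasDerivAt_lob (y := π - a - b) (by rwa [sin_pi_sub_sub])).differentiableAt.hasDerivAt
  refine ((hlob.add_const (lob b)).fun_add
    (hlob'.comp a (hasDerivAt_pi_sub_sub_const a b))).congr_deriv ?_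
  ring

lemma cot_add_sub_cot {a b : ℝ} (ha : sin a ≠ 0) (hab : sin (a + b) ≠ 0) :
    cos (a + b) / sin (a + b) - cos a / sin a = -sin b / (sin (a + b) * sin a) := by
  have hb : sin b = sin (a + b) * cos a - cos (a + b) * sin a := by
    rw [← sin_sub, add_sub_cancel_left]
  rw [div_sub_div _ _ hab ha, hb]
  ring

lemma hasDerivAt_deriv_Etri_fst {a b : ℝ} (ha : sin a ≠ 0) (hab : sin (a + b) ≠ 0) :
    HasDerivAt (fun a' => deriv (fun a'' => Etri a'' b) a')
      (-sin b / (sin (a + b) * sin a)) a := by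
  have hpartial : (fun a' => deriv (fun a'' => Etri a'' b) a') =ᶠ[𝓝 a]
      fun a' => deriv lob a' - deriv lob (π - a' - b) := by
    have hnear : ∀ᶠ a' in 𝓝 a, sin (a' + b) ≠ 0 :=
      (continuous_sin.comp (continuous_add_const b)).continuousAt.eventually_ne hab
    filter_upwards [eventually_sin_ne_zero ha, hnear] with a' ha' hab'
    exact (hasDerivAt_Etri_fst ha' hab').deriv
  have h := (hasDerivAt_deriv_lob ha).fun_sub
    ((hasDerivAt_deriv_lob (y := π - a - b) (by rwa [sin_pi_sub_sub])).comp a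
      (hasDerivAt_pi_sub_sub_const a b))
  refine (h.congr_of_eventuallyEq hpartial).congr_deriv ?_
  rw [← cot_add_sub_cot ha hab, sin_pi_sub_sub, cos_pi_sub_sub]
  ring

lemma hasDerivAt_deriv_Etri_fst_snd {a b : ℝ} (ha : sin a ≠ 0) (hab : sin (a + b) ≠ 0) :
    HasDerivAt (fun b' => deriv (fun a' => Etri a' b') a) (cos (a + b) / sin (a + b)) b := by
  have hpartial : (fun b' => deriv (fun a' => Etri a' b') a) =ᶠ[𝓝 b]
      fun b' => deriv lob a - deriv lob (π - a - b') := by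
    have hnear : ∀ᶠ b' in 𝓝 b, sin (a + b') ≠ 0 :=
      (continuous_sin.comp (continuous_const_add a)).continuousAt.eventually_ne hab
    filter_upwards [hnear] with b' hab'
    exact (hasDerivAt_Etri_fst ha hab').deriv
  have hinner : HasDerivAt (fun b' => π - a - b') (-1) b := by
    simpa using (hasDerivAt_id b).const_sub (π - a)
  have h := ((hasDerivAt_deriv_lob (y := π - a - b) (by rwa [sin_pi_sub_sub])).comp b
    hinner).const_sub (deriv lob a)
  refine (h.congr_of_eventuallyEq hpartial).congr_deriv ?_
  rw [sin_pi_sub_sub, cos_pi_sub_sub]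
  ring

lemma dotProduct_mulVec_fin_two_neg {a b c : ℝ} (ha : a < 0) (hdet : 0 < a * c - b ^ 2)
    {v : Fin 2 → ℝ} (hv : v ≠ 0) : v ⬝ᵥ (!![a, b; b, c] *ᵥ v) < 0 := by
  have hform : v ⬝ᵥ (!![a, b; b, c] *ᵥ v) = a * v 0 ^ 2 + 2 * b * v 0 * v 1 + c * v 1 ^ 2 := by
    simp only [dotProduct, cons_mulVec, Fin.sum_univ_two, cons_val_zero, cons_val_one,
      cons_val_fin_one, empty_mulVec]
    ring
  -- a q(x, y) = (a x + b y)² + (a c - b²) y²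
  have hsq : 0 < (a * v 0 + b * v 1) ^ 2 + (a * c - b ^ 2) * v 1 ^ 2 := by
    rcases eq_or_ne (v 1) 0 with h1 | h1
    · have h0 : v 0 ≠ 0 := fun h0 => hv (by ext i; fin_cases i <;> assumption)
      rw [h1, mul_zero, add_zero, zero_pow two_ne_zero, mul_zero, add_zero]
      exact pow_two_pos_of_ne_zero (mul_ne_zero ha.ne h0)
    · positivity
  rw [hform]
  nlinarith

theorem Etri_hessian (α β : ℝ) (hα : 0 < α) (hβ : 0 < β) (hs : α + β < Real.pi) :
    deriv (fun a => deriv (fun a' => Etri a' β) a) α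
        = -Real.sin β / (Real.sin (α + β) * Real.sin α) ∧
    deriv (fun b => deriv (fun a => Etri a b) α) β
        = Real.cos (α + β) / Real.sin (α + β) ∧
    deriv (fun b => deriv (fun b' => Etri α b') b) β
        = -Real.sin α / (Real.sin (α + β) * Real.sin β) ∧
    ∀ v : Fin 2 → ℝ, v ≠ 0 →
      v ⬝ᵥ ((!![-Real.sin β / (Real.sin (α + β) * Real.sin α),
                 Real.cos (α + β) / Real.sin (α + β);
                 Real.cos (α + β) / Real.sin (α + β),
                 -Real.sin α / (Real.sin (α + β) * Real.sin β)]) *ᵥ v) < 0 := by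
  have hsα : 0 < sin α := sin_pos_of_pos_of_lt_pi hα (by linarith)
  have hsβ : 0 < sin β := sin_pos_of_pos_of_lt_pi hβ (by linarith)
  have hsαβ : 0 < sin (α + β) := sin_pos_of_pos_of_lt_pi (by linarith) hs
  refine ⟨(hasDerivAt_deriv_Etri_fst hsα.ne' hsαβ.ne').deriv,
    (hasDerivAt_deriv_Etri_fst_snd hsα.ne' hsαβ.ne').deriv, ?_, fun v hv => ?_⟩
  · simp_rw [Etri_comm α, add_comm α β]
    exact (hasDerivAt_deriv_Etri_fst hsβ.ne' (add_comm α β ▸ hsαβ.ne')).deriv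
  · have hdet : -sin β / (sin (α + β) * sin α) * (-sin α / (sin (α + β) * sin β))
        - (cos (α + β) / sin (α + β)) ^ 2 = 1 := by
      field_simp
      linear_combination -sin_sq_add_cos_sq (α + β)
    exact dotProduct_mulVec_fin_two_neg
      (div_neg_of_neg_of_pos (neg_neg_of_pos hsβ) (by positivity)) (hdet ▸ one_pos) hv
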